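/- arXiv:2106.01672 — 7 statements merged into one kernel-verified Lean document; each statement's English description precedes it below -/
import Mathlib

section
/- For all real numbers x ≥ 0 and 0 < λ ≤ e - 1, one has log(1 + x/λ) · log(1 + λ) ≤ log(1 + x). -/
theorem stmt_0 (x lam : ℝ) (hx : 0 ≤ x) (hlam : 0 < lam) (hlam' : lam ≤ Real.exp 1 - 1) :
    Real.log (1 + x / lam) * Real.log (1 + lam) ≤ Real.log (1 + x) := by
  have h1x : (0:ℝ) < 1 + x := by linarith
  have hlog1x : 0 ≤ Real.log (1 + x) := Real.log_nonneg (by linarith)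
  have hlogl : 0 ≤ Real.log (1 + lam) := Real.log_nonneg (by linarith)
  rcases le_or_gt lam 1 with h1 | h1
  · -- λ ≤ 1 : Bernoulli
    have hp : 1 ≤ 1 / lam := by
      rw [le_div_iff₀ hlam]; linarith
    have hb : 1 + x / lam ≤ (1 + x) ^ (1 / lam) := by
      have := one_add_mul_self_le_rpow_one_add (s := x) (by linarith) hp
      calc 1 + x / lam = 1 + (1/lam) * x := by ring
        _ ≤ _ := this
    have hlog : Real.log (1 + x / lam) ≤ (1 / lam) * Real.log (1 + x) := by
      calc Real.log (1 + x / lam) ≤ Real.log ((1 + x) ^ (1 / lam)) :=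
            Real.log_le_log (by positivity) hb
        _ = (1 / lam) * Real.log (1 + x) := Real.log_rpow h1x _
    have hll : Real.log (1 + lam) ≤ lam := by
      have := Real.log_le_sub_one_of_pos (x := 1 + lam) (by linarith)
      linarith
    calc Real.log (1 + x / lam) * Real.log (1 + lam)
        ≤ ((1 / lam) * Real.log (1 + x)) * lam := by
          exact mul_le_mul hlog hll hlogl (by positivity)
      _ = Real.log (1 + x) := by field_simp
  · -- λ ≥ 1
    have hll : Real.log (1 + lam) ≤ 1 := by
      rw [Real.log_le_iff_le_exp (by linarith)]; linarith
    have hlog : Real.log (1 + x / lam) ≤ Real.log (1 + x) := by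
      apply Real.log_le_log (by positivity)
      have : x / lam ≤ x := by
        rw [div_le_iff₀ hlam]; nlinarith
      linarith
    calc Real.log (1 + x / lam) * Real.log (1 + lam)
        ≤ Real.log (1 + x) * 1 := mul_le_mul hlog hll hlogl hlog1x
      _ = _ := mul_one _
end

section
/- Let d ≥ 2 be an integer and define Φ_d(x) = x² (log(1+x))^{d-1} for x ≥ 0. Then for all x > 0 and 0 < λ ≤ e - 1, one has Φ_d(x/λ) ≤ Φ_d(x)/Φ_d(λ). -/
theorem stmt_1 (d : ℕ) (hd : 2 ≤ d) (Φ : ℝ → ℝ)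
    (hΦ : ∀ x : ℝ, 0 ≤ x → Φ x = x ^ 2 * (Real.log (1 + x)) ^ (d - 1))
    (x lam : ℝ) (hx : 0 < x) (hlam : 0 < lam) (hlam' : lam ≤ Real.exp 1 - 1) :
    Φ (x / lam) ≤ Φ x / Φ lam := by
  have hxl : 0 < x / lam := div_pos hx hlam
  rw [hΦ _ hxl.le, hΦ _ hx.le, hΦ _ hlam.le]
  set L := Real.log (1 + lam) with hL
  set A := Real.log (1 + x / lam) with hA
  set B := Real.log (1 + x) with hB
  have hLpos : 0 < L := Real.log_pos (by linarith)
  have hL1 : L ≤ 1 := by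
    have h := Real.log_le_log (show (0:ℝ) < 1 + lam by linarith)
      (show 1 + lam ≤ Real.exp 1 by linarith)
    rwa [Real.log_exp] at h
  have hLlam : L ≤ lam := by
    have := Real.log_le_sub_one_of_pos (show (0:ℝ) < 1 + lam by linarith)
    linarith
  have hApos : 0 < A := Real.log_pos (by linarith)
  have hBpos : 0 < B := Real.log_pos (by linarith)
  -- key inequality: A * L ≤ B
  have key : A * L ≤ B := by
    have h1 : L * A = Real.log ((1 + x / lam) ^ L) := by
      rw [Real.log_rpow (by linarith)]
    have h2 : (1 + x / lam : ℝ) ^ L ≤ 1 + L * (x / lam) :=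
      rpow_one_add_le_one_add_mul_self (by linarith) hLpos.le hL1
    have h3 : 1 + L * (x / lam) ≤ 1 + x := by
      have : L * (x / lam) ≤ lam * (x / lam) :=
        mul_le_mul_of_nonneg_right hLlam hxl.le
      have hlx : lam * (x / lam) = x := by field_simp
      linarith
    calc A * L = L * A := mul_comm _ _
      _ = Real.log ((1 + x / lam) ^ L) := h1
      _ ≤ Real.log (1 + x) := Real.log_le_log (by positivity) (h2.trans h3)
      _ = B := rfl
  have hpow : (A * L) ^ (d - 1) ≤ B ^ (d - 1) :=
    pow_le_pow_left₀ (by positivity) key _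
  rw [le_div_iff₀ (by positivity)]
  have hx2 : (x / lam) ^ 2 * (lam ^ 2) = x ^ 2 := by field_simp
  calc (x / lam) ^ 2 * A ^ (d - 1) * (lam ^ 2 * L ^ (d - 1))
      = x ^ 2 * ((A * L) ^ (d - 1)) := by rw [mul_pow, ← hx2]; ring
    _ ≤ x ^ 2 * B ^ (d - 1) := by
        exact mul_le_mul_of_nonneg_left hpow (by positivity)
end

section
/- The function Φ_d(x) = x²(log(1+x))^{d-1} is convex on [0,∞), for every integer d ≥ 1. -/
/-!
Since `log (1 + x)` and `x / (1 + x)` are nonnegative and nondecreasing on `[0, ∞)`, the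
derivative `2 x log (1 + x) ^ k + k x (x / (1 + x)) log (1 + x) ^ (k - 1)` of
`x ^ 2 log (1 + x) ^ k` is a sum of products of nonnegative nondecreasing functions, hence
nondecreasing, and a function with nondecreasing derivative is convex.
-/

open Real Set

lemma monotoneOn_div_one_add : MonotoneOn (fun x : ℝ => x / (1 + x)) (Ioi (-1)) := by
  intro x hx y hy hxy
  rw [mem_Ioi] at hx hy
  rw [div_le_div_iff₀ (by linarith) (by linarith)]
  linarith

lemma monotoneOn_log_one_add_pow (k : ℕ) :
    MonotoneOn (fun x : ℝ => log (1 + x) ^ k) (Ici 0) := by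
  intro x hx y hy hxy
  rw [mem_Ici] at hx
  exact pow_le_pow_left₀ (log_nonneg (by linarith)) (log_le_log (by linarith) (by linarith)) k

lemma hasDerivAt_sq_mul_log_one_add_pow (k : ℕ) {x : ℝ} (hx : 0 < 1 + x) :
    HasDerivAt (fun y => y ^ 2 * log (1 + y) ^ k)
      (2 * x * log (1 + x) ^ k + k * (x * (x / (1 + x)) * log (1 + x) ^ (k - 1))) x := by
  have hlog : HasDerivAt (fun y => log (1 + y)) (1 / (1 + x)) x :=
    ((hasDerivAt_id x).const_add 1).log hx.ne'
  refine ((hasDerivAt_pow 2 x).mul (hlog.fun_pow k)).congr_deriv ?_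
  field_simp
  ring

lemma monotoneOn_deriv_sq_mul_log_one_add_pow (k : ℕ) :
    MonotoneOn (fun x : ℝ =>
      2 * x * log (1 + x) ^ k + k * (x * (x / (1 + x)) * log (1 + x) ^ (k - 1))) (Ici 0) := by
  have hid : MonotoneOn (fun x : ℝ => x) (Ici 0) := monotone_id.monotoneOn _
  have hdiv := monotoneOn_div_one_add.mono (Ici_subset_Ioi.2 (by norm_num : (-1 : ℝ) < 0))
  have hdiv_nonneg (x : ℝ) (hx : x ∈ Ici 0) : 0 ≤ x / (1 + x) := by
    rw [mem_Ici] at hx; positivity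
  have hlog_nonneg (n : ℕ) (x : ℝ) (hx : x ∈ Ici 0) : 0 ≤ log (1 + x) ^ n :=
    pow_nonneg (log_nonneg (by rw [mem_Ici] at hx; linarith)) n
  refine MonotoneOn.add ?_ (monotoneOn_const.mul ?_ (fun _ _ => k.cast_nonneg) fun x hx => ?_)
  · exact (monotoneOn_const.mul hid (fun _ _ => zero_le_two) fun x hx => hx).mul
      (monotoneOn_log_one_add_pow k) (fun x hx => mul_nonneg zero_le_two hx) (hlog_nonneg k)
  · exact (hid.mul hdiv (fun x hx => hx) hdiv_nonneg).mul (monotoneOn_log_one_add_pow (k - 1))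
      (fun x hx => mul_nonneg hx (hdiv_nonneg x hx)) (hlog_nonneg (k - 1))
  · exact mul_nonneg (mul_nonneg hx (hdiv_nonneg x hx)) (hlog_nonneg (k - 1) x hx)

theorem convexOn_sq_mul_log_one_add_pow (k : ℕ) :
    ConvexOn ℝ (Ici 0) (fun x : ℝ => x ^ 2 * log (1 + x) ^ k) := by
  have hderiv (x : ℝ) (hx : x ∈ Ici 0) := hasDerivAt_sq_mul_log_one_add_pow k
    (by rw [mem_Ici] at hx; linarith : 0 < 1 + x)
  refine MonotoneOn.convexOn_of_deriv (convex_Ici 0)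
    (fun x hx => (hderiv x hx).continuousAt.continuousWithinAt) ?_ ?_ <;> rw [interior_Ici]
  · exact fun x hx => (hderiv x (Ioi_subset_Ici_self hx)).differentiableAt.differentiableWithinAt
  · exact ((monotoneOn_deriv_sq_mul_log_one_add_pow k).mono Ioi_subset_Ici_self).congr
      fun x hx => (hderiv x (Ioi_subset_Ici_self hx)).deriv.symm

theorem stmt_3_general (d : ℕ) :
    ConvexOn ℝ (Set.Ici (0 : ℝ))
      (fun x : ℝ => x ^ 2 * (Real.log (1 + x)) ^ (d - 1)) :=
  convexOn_sq_mul_log_one_add_pow (d - 1)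

theorem stmt_3 (d : ℕ) (hd : 1 ≤ d) :
    ConvexOn ℝ (Set.Ici (0 : ℝ))
      (fun x : ℝ => x ^ 2 * (Real.log (1 + x)) ^ (d - 1)) :=
  stmt_3_general d
end

section
/- For all real numbers x ≥ 0 and 0 < λ < 1, one has log(1 + x/λ) · log(1 + λ) ≥ log(2) · λ · log(1 + x). -/
theorem stmt_4 (x lam : ℝ) (hx : 0 ≤ x) (hlam : 0 < lam) (hlam' : lam < 1) :
    Real.log 2 * lam * Real.log (1 + x) ≤ Real.log (1 + x / lam) * Real.log (1 + lam) := by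
  have h1 : lam * Real.log 2 ≤ Real.log (1 + lam) := by
    have hc := (strictConcaveOn_log_Ioi.concaveOn).2 (show (1:ℝ) ∈ Set.Ioi 0 by norm_num)
      (show (2:ℝ) ∈ Set.Ioi 0 by norm_num) (by linarith : (0:ℝ) ≤ 1 - lam) hlam.le
      (by ring : (1 - lam) + lam = 1)
    simp only [smul_eq_mul, Real.log_one, mul_one, mul_zero, zero_add] at hc
    have h : 1 - lam + lam * 2 = 1 + lam := by ring
    rw [h] at hc
    linarith
  have h2 : Real.log (1 + x) ≤ Real.log (1 + x / lam) := by
    apply Real.log_le_log (by linarith)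
    have : x ≤ x / lam := by
      rw [le_div_iff₀ hlam]
      nlinarith
    linarith
  have h3 : 0 ≤ Real.log (1 + x) := Real.log_nonneg (by linarith)
  have h4 : 0 ≤ Real.log (1 + lam) := Real.log_nonneg (by linarith)
  have h5 : 0 ≤ Real.log (1 + x / lam) := Real.log_nonneg (by
    have := div_nonneg hx hlam.le; linarith)
  calc Real.log 2 * lam * Real.log (1 + x) = Real.log (1 + x) * (lam * Real.log 2) := by ring
    _ ≤ Real.log (1 + x / lam) * Real.log (1 + lam) :=
      mul_le_mul h2 h1 (mul_nonneg hlam.le (Real.log_nonneg one_le_two)) h5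
end

section
/- For all real numbers x ≥ 0 and λ ≥ 1, one has log(1 + x/λ) · log(1 + λ) ≥ log(2) · log(1 + x) / λ. -/
theorem stmt_5 (x lam : ℝ) (hx : 0 ≤ x) (hlam : 1 ≤ lam) :
    Real.log 2 * Real.log (1 + x) / lam ≤ Real.log (1 + x / lam) * Real.log (1 + lam) := by
  have hl0 : (0:ℝ) < lam := by linarith
  have ht : (0:ℝ) ≤ x / lam := div_nonneg hx hl0.le
  have h1 : 1 + x ≤ (1 + x / lam) ^ lam := by
    have := one_add_mul_self_le_rpow_one_add (by linarith : (-1:ℝ) ≤ x / lam) hlam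
    rwa [mul_div_cancel₀ x hl0.ne'] at this
  have hlog : Real.log (1 + x) ≤ lam * Real.log (1 + x / lam) := by
    calc Real.log (1 + x) ≤ Real.log ((1 + x / lam) ^ lam) :=
          Real.log_le_log (by linarith) h1
      _ = lam * Real.log (1 + x / lam) := Real.log_rpow (by linarith) lam
  have h2 : Real.log (1 + x) / lam ≤ Real.log (1 + x / lam) := by
    rw [div_le_iff₀ hl0]; nlinarith [hlog]
  have h3 : Real.log 2 ≤ Real.log (1 + lam) := Real.log_le_log (by norm_num) (by linarith)
  have h6 : 0 ≤ Real.log (1 + x) / lam := div_nonneg (Real.log_nonneg (by linarith)) hl0.le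
  calc Real.log 2 * Real.log (1 + x) / lam = Real.log 2 * (Real.log (1 + x) / lam) := by ring
    _ ≤ Real.log (1 + lam) * Real.log (1 + x / lam) :=
        mul_le_mul h3 h2 h6 (Real.log_nonneg (by linarith))
    _ = Real.log (1 + x / lam) * Real.log (1 + lam) := by ring
end

section
/- Let d ≥ 1 and define Φ_d(x) = x²(log(1+x))^{d-1} for x ≥ 0, and its Young conjugate Ψ_d(y) = sup_{x ≥ 0} (x·y − Φ_d(x)). Then for every x ≥ 0, one has Ψ_d(x · (log(1+x))^{d-1}) ≤ Φ_d(x). -/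
/-- The Young function `Φ_d`. -/
noncomputable def Phi (d : ℕ) (x : ℝ) : ℝ := x ^ 2 * (Real.log (1 + x)) ^ (d - 1)

/-- The Young conjugate of `Φ_d`, as a supremum over nonnegative arguments. -/
noncomputable def Psi (d : ℕ) (y : ℝ) : ℝ := sSup {z : ℝ | ∃ x : ℝ, 0 ≤ x ∧ z = x * y - Phi d x}

theorem stmt_8 (d : ℕ) (hd : 1 ≤ d) (x : ℝ) (hx : 0 ≤ x) :
    Psi d (x * (Real.log (1 + x)) ^ (d - 1)) ≤ Phi d x := by
  have hLx : 0 ≤ Real.log (1 + x) := Real.log_nonneg (by linarith)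
  have hPhix : 0 ≤ Phi d x := mul_nonneg (sq_nonneg x) (pow_nonneg hLx _)
  apply Real.sSup_le _ hPhix
  rintro z ⟨t, ht, rfl⟩
  have hLt : 0 ≤ Real.log (1 + t) := Real.log_nonneg (by linarith)
  unfold Phi
  rcases le_total t x with h | h
  · have h1 : t * (x * Real.log (1 + x) ^ (d - 1)) ≤ x ^ 2 * Real.log (1 + x) ^ (d - 1) := by
      have := mul_le_mul_of_nonneg_right (mul_le_mul_of_nonneg_right h hx)
        (pow_nonneg hLx (d - 1))
      calc t * (x * Real.log (1 + x) ^ (d - 1))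
          = t * x * Real.log (1 + x) ^ (d - 1) := by ring
        _ ≤ x * x * Real.log (1 + x) ^ (d - 1) := this
        _ = x ^ 2 * Real.log (1 + x) ^ (d - 1) := by ring
    have h2 : 0 ≤ t ^ 2 * Real.log (1 + t) ^ (d - 1) :=
      mul_nonneg (sq_nonneg t) (pow_nonneg hLt _)
    linarith
  · have hL : Real.log (1 + x) ^ (d - 1) ≤ Real.log (1 + t) ^ (d - 1) :=
      pow_le_pow_left₀ hLx (Real.log_le_log (by linarith) (by linarith)) _
    have h1 : t * (x * Real.log (1 + x) ^ (d - 1)) ≤ t ^ 2 * Real.log (1 + t) ^ (d - 1) := by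
      calc t * (x * Real.log (1 + x) ^ (d - 1))
          = t * (x * Real.log (1 + x) ^ (d - 1)) := rfl
        _ ≤ t * (t * Real.log (1 + t) ^ (d - 1)) := by
            apply mul_le_mul_of_nonneg_left _ ht
            exact mul_le_mul h hL (pow_nonneg hLx _) ht
        _ = t ^ 2 * Real.log (1 + t) ^ (d - 1) := by ring
    linarith [mul_nonneg (sq_nonneg x) (pow_nonneg hLx (d-1))]
end

section
/- Let (Ω, F, P) be a probability space, d ≥ 1, Φ_d(x) = x²(log(1+x))^{d-1}, and X a random variable with E[Φ_d(|X|)] < ∞. If Φ_d^{-1}(E[Φ_d(|X|)]) ≤ e − 1, then the Luxemburg norm satisfies ‖X‖_{Φ_d} ≤ Φ_d^{-1}(E[Φ_d(|X|)]). -/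
open MeasureTheory

/-- The Luxemburg norm associated to a Young function `Φ`. -/
noncomputable def luxNorm {Ω : Type*} [MeasurableSpace Ω] (P : Measure Ω)
    (Φ : ℝ → ℝ) (f : Ω → ℝ) : ℝ :=
  sInf {t : ℝ | 0 < t ∧ ∫ ω, Φ (|f ω| / t) ∂P ≤ 1}

/-- Key log inequality: `log(1+a) * log(1+b) ≤ log(1+a*b)` for `a ≥ 0` and
`0 ≤ log(1+b) ≤ 1`. -/
lemma log_mul_log_le {a b : ℝ} (ha : 0 ≤ a) (hb : 0 ≤ b)
    (hb1 : Real.log (1 + b) ≤ 1) :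
    Real.log (1 + a) * Real.log (1 + b) ≤ Real.log (1 + a * b) := by
  set v := Real.log (1 + b) with hv
  have hv0 : 0 ≤ v := Real.log_nonneg (by linarith)
  have h1a : (0:ℝ) < 1 + a := by linarith
  have hbv : b = Real.exp v - 1 := by
    rw [hv, Real.exp_log (by linarith)]; ring
  have hbern : (1 + a) ^ v ≤ 1 + v * a :=
    rpow_one_add_le_one_add_mul_self (by linarith) hv0 hb1
  have hexp : v + 1 ≤ Real.exp v := Real.add_one_le_exp v
  have h2 : 1 + v * a ≤ 1 + a * b := by
    rw [hbv]; nlinarith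
  calc Real.log (1 + a) * v = Real.log ((1 + a) ^ v) := by
        rw [Real.log_rpow h1a]; ring
    _ ≤ Real.log (1 + a * b) := by
        apply Real.log_le_log (by positivity)
        exact hbern.trans h2

lemma Phi_nonneg (d : ℕ) {x : ℝ} (hx : 0 ≤ x) : 0 ≤ Phi d x := by
  have : (0:ℝ) ≤ Real.log (1 + x) := Real.log_nonneg (by linarith)
  unfold Phi; positivity

lemma Phi_pos (d : ℕ) (hd : 1 ≤ d) {x : ℝ} (hx : 0 < x) : 0 < Phi d x := by
  have : (0:ℝ) < Real.log (1 + x) := Real.log_pos (by linarith)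
  unfold Phi; positivity

lemma Phi_eq_zero (d : ℕ) (hd : 1 ≤ d) {x : ℝ} (hx : 0 ≤ x) (h : Phi d x = 0) :
    x = 0 := by
  by_contra hne
  exact absurd h (ne_of_gt (Phi_pos d hd (lt_of_le_of_ne hx (Ne.symm hne))))

/-- Pointwise inequality: `Phi d (x / y) * Phi d y ≤ Phi d x`. -/
lemma Phi_div_mul_le (d : ℕ) {x y : ℝ} (hx : 0 ≤ x) (hy : 0 < y)
    (hsmall : y ≤ Real.exp 1 - 1) :
    Phi d (x / y) * Phi d y ≤ Phi d x := by
  have hxy : 0 ≤ x / y := div_nonneg hx hy.le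
  have hL1 : Real.log (1 + y) ≤ 1 := by
    have := Real.log_le_log (show (0:ℝ) < 1 + y by linarith)
      (show 1 + y ≤ Real.exp 1 by linarith)
    simpa [Real.log_exp] using this
  have hkey : Real.log (1 + x / y) * Real.log (1 + y) ≤ Real.log (1 + x) := by
    have := log_mul_log_le hxy hy.le hL1
    rwa [div_mul_cancel₀ x hy.ne'] at this
  have hLxy : 0 ≤ Real.log (1 + x / y) := Real.log_nonneg (by linarith)
  have hLy : 0 ≤ Real.log (1 + y) := Real.log_nonneg (by linarith)
  have h1 : (Real.log (1 + x / y) * Real.log (1 + y)) ^ (d - 1)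
      ≤ Real.log (1 + x) ^ (d - 1) :=
    pow_le_pow_left₀ (by positivity) hkey _
  unfold Phi
  calc (x / y) ^ 2 * Real.log (1 + x / y) ^ (d - 1) *
        (y ^ 2 * Real.log (1 + y) ^ (d - 1))
      = x ^ 2 * (Real.log (1 + x / y) * Real.log (1 + y)) ^ (d - 1) := by
        rw [mul_pow]
        field_simp
    _ ≤ x ^ 2 * Real.log (1 + x) ^ (d - 1) := by
        exact mul_le_mul_of_nonneg_left h1 (by positivity)

theorem stmt_10 {Ω : Type*} [MeasurableSpace Ω] (P : Measure Ω) [IsProbabilityMeasure P]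
    (d : ℕ) (hd : 1 ≤ d) (X : Ω → ℝ)
    (hint : Integrable (fun ω => Phi d |X ω|) P)
    (y : ℝ) (hy : 0 ≤ y) (hΦy : Phi d y = ∫ ω, Phi d |X ω| ∂P)
    (hsmall : y ≤ Real.exp 1 - 1) :
    luxNorm P (Phi d) X ≤ y := by
  have hbdd : BddBelow {t : ℝ | 0 < t ∧ ∫ ω, Phi d (|X ω| / t) ∂P ≤ 1} :=
    ⟨0, fun t ht => ht.1.le⟩
  rcases eq_or_lt_of_le hy with hy0 | hy0
  · -- y = 0 : integral is zero, X = 0 a.e.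
    have hI0 : ∫ ω, Phi d |X ω| ∂P = 0 := by
      rw [← hΦy, ← hy0]; simp [Phi]
    have hae : ∀ᵐ ω ∂P, Phi d |X ω| = 0 := by
      have hnn : 0 ≤ᵐ[P] fun ω => Phi d |X ω| :=
        Filter.Eventually.of_forall fun ω => Phi_nonneg d (abs_nonneg _)
      exact (integral_eq_zero_iff_of_nonneg_ae hnn hint).mp hI0
    have hX0 : ∀ᵐ ω ∂P, X ω = 0 := by
      filter_upwards [hae] with ω hω
      have := Phi_eq_zero d hd (abs_nonneg (X ω)) hω
      exact abs_eq_zero.mp this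
    have hmem : ∀ t : ℝ, 0 < t → t ∈ {t : ℝ | 0 < t ∧ ∫ ω, Phi d (|X ω| / t) ∂P ≤ 1} := by
      intro t ht
      refine ⟨ht, ?_⟩
      have : ∫ ω, Phi d (|X ω| / t) ∂P = 0 := by
        rw [integral_eq_zero_iff_of_nonneg_ae]
        · filter_upwards [hX0] with ω hω
          simp [hω, Phi]
        · filter_upwards [hX0] with ω hω
          simp [hω, Phi]
        · apply Integrable.congr (integrable_zero _ _ P)
          filter_upwards [hX0] with ω hω
          simp [hω, Phi]
      simp [this]
    have : ∀ ε : ℝ, 0 < ε → luxNorm P (Phi d) X ≤ ε := fun ε hε =>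
      csInf_le hbdd (hmem ε hε)
    rw [← hy0]
    exact le_of_forall_pos_le_add fun ε hε => by simpa using this ε hε
  · -- y > 0
    have hΦypos : 0 < Phi d y := Phi_pos d hd hy0
    apply csInf_le hbdd
    refine ⟨hy0, ?_⟩
    have hpt : ∀ ω, Phi d (|X ω| / y) ≤ Phi d |X ω| / Phi d y := by
      intro ω
      rw [le_div_iff₀ hΦypos]
      exact Phi_div_mul_le d (abs_nonneg _) hy0 hsmall
    calc ∫ ω, Phi d (|X ω| / y) ∂P
        ≤ ∫ ω, Phi d |X ω| / Phi d y ∂P := by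
          apply integral_mono_of_nonneg
          · exact Filter.Eventually.of_forall fun ω =>
              Phi_nonneg d (div_nonneg (abs_nonneg _) hy0.le)
          · exact hint.div_const _
          · exact Filter.Eventually.of_forall hpt
      _ = (∫ ω, Phi d |X ω| ∂P) / Phi d y := integral_div _ _
      _ = 1 := by rw [← hΦy]; exact div_self hΦypos.ne'
end
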